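/- arXiv:2105.08951 — 8 statements merged into one kernel-verified Lean document; each statement's English description precedes it below -/
import Mathlib

section
/- Let B be a nonempty finite type and T a predicate on B*. Then T is productive if and only if T has unbounded paths, and T is inductively barred if and only if T is uniformly barred. -/
namespace BarInd

variable {A B : Type*}

/-- `u` is an initial prefix of the infinite sequence `α`. -/
def SeqPrefix (u : List B) (α : ℕ → B) : Prop := ∀ i : Fin u.length, u.get i = α i

/-- `T` is a tree: closed under restriction. -/
def IsTree (T : List B → Prop) : Prop := ∀ u a, T (u ++ [a]) → T u
/-- `T` is monotone: closed under extension. -/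
def IsMono (T : List B → Prop) : Prop := ∀ u a, T u → T (u ++ [a])
/-- Downwards arborification `⌊T⌋`. -/
def DownArbor (T : List B → Prop) : List B → Prop := fun u => ∀ u', u' <+: u → T u'
/-- Upwards monotonisation `⌈T⌉`. -/
def UpMonot (T : List B → Prop) : List B → Prop := fun u => ∃ u', u' <+: u ∧ T u'
def UnboundedPaths (T : List B → Prop) : Prop := ∀ n, ∃ u, u.length = n ∧ DownArbor T u
def StagedInfinite (T : List B → Prop) : Prop := ∀ n, ∃ u : List B, u.length = n ∧ T u
def UniformlyBarred (T : List B → Prop) : Prop := ∃ n, ∀ u : List B, u.length = n → UpMonot T u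
def StagedBarred (T : List B → Prop) : Prop := ∃ n, ∀ u : List B, u.length = n → T u

/-- `u` is in the pruning of `T` (coinductive/greatest fixed point, impredicative encoding). -/
def Pruning (T : List B → Prop) (u : List B) : Prop :=
  ∃ X : List B → Prop, X u ∧ ∀ v, X v → T v ∧ ∃ a, X (v ++ [a])
def Productive (T : List B → Prop) : Prop := Pruning T []

/-- Hereditary closure of `T` (least fixed point). -/
inductive HerClos (T : List B → Prop) : List B → Prop
  | base (u : List B) : T u → HerClos T u
  | step (u : List B) : (∀ a, HerClos T (u ++ [a])) → HerClos T u

def IndBarred (T : List B → Prop) : Prop := HerClos T []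
def Spread (T : List B → Prop) : Prop := T [] ∧ ∀ u, T u → ∃ a, T (u ++ [a])
def Hereditary (T : List B → Prop) : Prop := ∀ u, (∀ a, T (u ++ [a])) → T u
def Barricaded (T : List B → Prop) : Prop := Hereditary T → T []
def InfBranch (T : List B → Prop) : Prop := ∃ α : ℕ → B, ∀ u, SeqPrefix u α → T u
def Barred (T : List B → Prop) : Prop := ∀ α : ℕ → B, ∃ u, SeqPrefix u α ∧ T u

/- Finite approximations of functions: sequences of pairs. -/

/-- `v ⊆ v'` : every pair occurring in `v` occurs in `v'`. -/
def PSub (v v' : List (A × B)) : Prop := ∀ x, x ∈ v → x ∈ v'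
/-- `a` is in the domain of `w`. -/
def InDom (w : List (A × B)) (a : A) : Prop := ∃ b, (a, b) ∈ w
/-- `T` is `A`-`B`-approximable from `v` (coinductive, impredicative encoding). -/
def ApproxFrom (T : List (A × B) → Prop) (v : List (A × B)) : Prop :=
  ∃ X : List (A × B) → Prop, X v ∧
    ∀ w, X w → ((∀ v', PSub v' w → T v') ∧ ∀ a, ¬ InDom w a → ∃ b, X (w ++ [(a, b)]))
/-- `T` is `A`-`B`-approximable. -/
def Approximable (T : List (A × B) → Prop) : Prop := ApproxFrom T []

/-- `T` is inductively `A`-`B`-barred from a sequence (least fixed point). -/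
inductive IndPairBarred (T : List (A × B) → Prop) : List (A × B) → Prop
  | base (w : List (A × B)) : (∃ v, PSub v w ∧ T v) → IndPairBarred T w
  | step (w : List (A × B)) (a : A) : ¬ InDom w a →
      (∀ b, IndPairBarred T (w ++ [(a, b)])) → IndPairBarred T w

def InductivelyPairBarred (T : List (A × B) → Prop) : Prop := IndPairBarred T []
/-- `v ≺ α` : `α a = b` for every `(a,b) ∈ v`. -/
def PairPrefix (v : List (A × B)) (α : A → B) : Prop := ∀ p ∈ v, α p.1 = p.2
def PairChoiceFn (T : List (A × B) → Prop) : Prop := ∃ α : A → B, ∀ v, PairPrefix v α → T v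
def PairBarred (T : List (A × B) → Prop) : Prop := ∀ α : A → B, ∃ v, PairPrefix v α ∧ T v

/-- `ord u` pairs each element of `u` with its position. -/
def ordSeq (u : List B) : List (ℕ × B) := u.zipIdx.map Prod.swap
/-- `T̂` : the lift of a predicate on `B*` to `(ℕ × B)*`. -/
def hatT (T : List B → Prop) : List (ℕ × B) → Prop := fun v => ∃ u, T u ∧ v = ordSeq u
/-- `‖T‖` : the restriction of a predicate on `(ℕ × B)*` to sequential sequences. -/
def normT (T : List (ℕ × B) → Prop) : List B → Prop := fun u => T (ordSeq u)
/-- Upwards arborification w.r.t. `⊆`. -/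
def UpPairArbor (S : List (A × B) → Prop) : List (A × B) → Prop :=
  fun v => ∃ v', PSub v v' ∧ S v'
/-- Upwards monotonisation w.r.t. `⊆`. -/
def UpPairMonot (S : List (A × B) → Prop) : List (A × B) → Prop :=
  fun v => ∃ v', PSub v' v ∧ S v'

/-- Chaining `R*⊤(b)` : all steps in `u` from `b` are in `R`. -/
def Chaining (R : B → B → Prop) : B → List B → Prop
  | _, [] => True
  | b, b' :: u => R b b' ∧ Chaining R b' u

/-- Antichaining `R*⊥(b)`. -/
def Antichaining (R : B → B → Prop) : B → List B → Prop
  | _, [] => False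
  | b, b' :: u => R b b' ∨ Antichaining R b' u

/-- Positive alignment `R▷⊤(b₀)`. -/
def PosAlign (R : B → B → Prop) (b₀ : B) (u : List B) : Prop :=
  match u.reverse with
  | [] => True
  | [b] => R b₀ b
  | b' :: b :: _ => R b b'

/-- Blockings `R▷⊥(b₀)`. -/
def Blockings (R : B → B → Prop) (b₀ : B) (u : List B) : Prop :=
  match u.reverse with
  | [] => False
  | [b] => R b₀ b
  | b' :: b :: _ => R b b'

/-- Sequential positive alignment `R^ℕ⊤`. -/
def SeqPosAlign (R : ℕ → B → Prop) (u : List B) : Prop :=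
  match u.reverse with
  | [] => True
  | b :: v => R v.length b

/-- Sequential negative alignment `R^ℕ⊥`. -/
def SeqNegAlign (R : ℕ → B → Prop) (u : List B) : Prop :=
  match u.reverse with
  | [] => False
  | b :: v => R v.length b

end BarInd

/-!
König's lemma and the fan theorem for a finitely branching tree reduce to one pigeonhole step:
if for every depth `n` some child `a` of `v` extends `n` steps inside `⌊T⌋`, then, since there
are finitely many children and extending is antitone in `n`, a single child extends to every
depth; this child continues the pruning. Dually, if every child of `u` is barred by `⌈T⌉`
within some depth, a common depth bars all children, so a hereditary derivation of `⟨⟩`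
yields a uniform bar. Conversely, a uniform bar at depth `n` is unfolded into a hereditary
derivation by `n` steps of the closure.
-/

namespace BarInd

variable {B : Type*} {T : List B → Prop}

theorem exists_forall_of_forall_exists_monotone {ι : Type*} [Finite ι] {P : ι → ℕ → Prop}
    (hP : ∀ i, Monotone (P i)) (h : ∀ i, ∃ n, P i n) : ∃ n, ∀ i, P i n :=
  (Filter.eventually_all.2 fun i =>
    let ⟨n, hn⟩ := h i
    Filter.eventually_atTop.2 ⟨n, fun _ hm => hP i hm hn⟩).exists

theorem exists_forall_of_forall_exists_antitone {ι : Type*} [Finite ι] {P : ι → ℕ → Prop}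
    (hP : ∀ i, Antitone (P i)) (h : ∀ n, ∃ i, P i n) : ∃ i, ∀ n, P i n := by
  by_contra! hne
  obtain ⟨n, hn⟩ := exists_forall_of_forall_exists_monotone
    (P := fun i n => ¬ P i n) (fun i _ _ hmn hm => hm ∘ hP i hmn) hne
  obtain ⟨i, hi⟩ := h n
  exact hn i hi

theorem DownArbor.of_prefix {u v : List B} (huv : u <+: v) (hv : DownArbor T v) :
    DownArbor T u :=
  fun _ hw => hv _ (hw.trans huv)

theorem downArbor_concat_iff {u : List B} {a : B} :
    DownArbor T (u ++ [a]) ↔ DownArbor T u ∧ T (u ++ [a]) := by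
  simp only [DownArbor, List.prefix_concat_iff, or_imp, forall_and, forall_eq]
  exact and_comm

theorem UpMonot.of_prefix {u v : List B} (huv : u <+: v) (hu : UpMonot T u) : UpMonot T v :=
  let ⟨w, hw, hT⟩ := hu
  ⟨w, hw.trans huv, hT⟩

theorem upMonot_concat_iff {u : List B} {a : B} :
    UpMonot T (u ++ [a]) ↔ UpMonot T u ∨ T (u ++ [a]) := by
  simp only [UpMonot, List.prefix_concat_iff, or_and_right, exists_or, exists_eq_left]
  exact or_comm

theorem upMonot_nil_iff : UpMonot T [] ↔ T [] := by
  simp [UpMonot]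

def ExtendsBy (T : List B → Prop) (v : List B) (n : ℕ) : Prop :=
  ∃ w : List B, w.length = n ∧ DownArbor T (v ++ w)

theorem antitone_extendsBy (v : List B) : Antitone (ExtendsBy T v) := by
  rintro m n hmn ⟨w, rfl, hw⟩
  exact ⟨w.take m, List.length_take_of_le hmn,
    hw.of_prefix ((List.prefix_append_right_inj v).2 (List.take_prefix m w))⟩

theorem extendsBy_succ_iff {v : List B} {n : ℕ} :
    ExtendsBy T v (n + 1) ↔ ∃ a, ExtendsBy T (v ++ [a]) n := by
  constructor
  · rintro ⟨_ | ⟨a, w⟩, hlen, hw⟩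
    · simp at hlen
    · exact ⟨a, w, by simpa using hlen, by simpa using hw⟩
  · rintro ⟨a, w, rfl, hw⟩
    exact ⟨a :: w, rfl, by simpa using hw⟩

def BarredWithin (T : List B → Prop) (u : List B) (n : ℕ) : Prop :=
  ∀ w : List B, w.length = n → UpMonot T (u ++ w)

theorem monotone_barredWithin (u : List B) : Monotone (BarredWithin T u) := by
  intro m n hmn hm w hw
  exact (hm (w.take m) (List.length_take_of_le (hw ▸ hmn))).of_prefix
    ((List.prefix_append_right_inj u).2 (List.take_prefix m w))

theorem barredWithin_succ_iff {u : List B} {n : ℕ} :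
    BarredWithin T u (n + 1) ↔ ∀ a, BarredWithin T (u ++ [a]) n := by
  constructor
  · intro h a w hw
    simpa using h (a :: w) (by simp [hw])
  · rintro h (_ | ⟨a, w⟩) hw
    · simp at hw
    · simpa using h a w (by simpa using hw)

theorem unboundedPaths_of_productive (h : Productive T) : UnboundedPaths T := by
  obtain ⟨X, hX0, hX⟩ := h
  have hpath : ∀ n, ∃ u : List B, u.length = n ∧ X u ∧ DownArbor T u := by
    intro n
    induction n with
    | zero => exact ⟨[], rfl, hX0, fun u hu => List.prefix_nil.1 hu ▸ (hX [] hX0).1⟩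
    | succ n ih =>
      obtain ⟨u, rfl, hXu, hu⟩ := ih
      obtain ⟨a, hXa⟩ := (hX u hXu).2
      exact ⟨u ++ [a], by simp, hXa, downArbor_concat_iff.2 ⟨hu, (hX _ hXa).1⟩⟩
  intro n
  obtain ⟨u, hlen, -, hu⟩ := hpath n
  exact ⟨u, hlen, hu⟩

theorem productive_of_unboundedPaths [Finite B] (h : UnboundedPaths T) : Productive T := by
  refine ⟨fun v => ∀ n, ExtendsBy T v n, h, fun v hv => ⟨?_, ?_⟩⟩
  · obtain ⟨w, hw, hvw⟩ := hv 0
    exact hvw v (by simp [List.length_eq_zero_iff.1 hw])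
  · exact exists_forall_of_forall_exists_antitone (fun a => antitone_extendsBy (v ++ [a]))
      fun n => extendsBy_succ_iff.1 (hv (n + 1))

theorem HerClos.exists_barredWithin [Finite B] {u : List B} (h : HerClos T u) :
    ∃ n, BarredWithin T u n := by
  induction h with
  | base u hu =>
    exact ⟨0, fun w hw => ⟨u, by simp [List.length_eq_zero_iff.1 hw], hu⟩⟩
  | step u _ ih =>
    obtain ⟨n, hn⟩ := exists_forall_of_forall_exists_monotone
      (fun a => monotone_barredWithin (u ++ [a])) ih
    exact ⟨n + 1, barredWithin_succ_iff.2 hn⟩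

theorem herClos_of_barredWithin {u : List B} {n : ℕ} (h : BarredWithin T u n)
    (hu : ¬ UpMonot T u) : HerClos T u := by
  induction n generalizing u with
  | zero => exact absurd (by simpa using h [] rfl) hu
  | succ n ih =>
    refine .step u fun a => ?_
    by_cases hua : UpMonot T (u ++ [a])
    · exact .base _ ((upMonot_concat_iff.1 hua).resolve_left hu)
    · exact ih (barredWithin_succ_iff.1 h a) hua

theorem productive_iff_unboundedPaths [Finite B] : Productive T ↔ UnboundedPaths T :=
  ⟨unboundedPaths_of_productive, productive_of_unboundedPaths⟩

theorem indBarred_iff_uniformlyBarred [Finite B] : IndBarred T ↔ UniformlyBarred T := by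
  refine ⟨HerClos.exists_barredWithin, fun ⟨n, hn⟩ => ?_⟩
  by_cases hT : T []
  · exact .base _ hT
  · exact herClos_of_barredWithin hn (upMonot_nil_iff.not.2 hT)

end BarInd

open BarInd in
theorem stmt5_general {B : Type*} [Finite B] (T : List B → Prop) :
    (Productive T ↔ UnboundedPaths T) ∧ (IndBarred T ↔ UniformlyBarred T) :=
  ⟨productive_iff_unboundedPaths, indBarred_iff_uniformlyBarred⟩

open BarInd in
theorem stmt5 {B : Type*} [Nonempty B] [Finite B] (T : List B → Prop) :
    (Productive T ↔ UnboundedPaths T) ∧ (IndBarred T ↔ UniformlyBarred T) :=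
  stmt5_general T
end

section
/- Let B be a type. Then: (∀ predicate T on B*, T a spread → T has an infinite branch) holds if and only if (∀ predicate T on B*, T productive → T has an infinite branch) holds; and dually, (∀ predicate T on B*, T barred → T barricaded) holds if and only if (∀ predicate T on B*, T barred → T inductively barred) holds. -/
/-!
A spread is productive (it witnesses its own pruning), and conversely the pruning of a productive
predicate is a spread contained in it; since having an infinite branch is monotone, the two
branch principles are equivalent. Dually, a hereditary predicate contains the hereditary closure
of each of its subpredicates, while the hereditary closure of a barred predicate is itself barred
and hereditary; since being barred is monotone, the two bar principles are equivalent.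
-/

namespace BarInd

variable {B : Type*} {T S : List B → Prop}

theorem InfBranch.mono (hTS : ∀ u, T u → S u) : InfBranch T → InfBranch S :=
  fun ⟨α, hα⟩ => ⟨α, fun u hu => hTS u (hα u hu)⟩

theorem Barred.mono (hTS : ∀ u, T u → S u) (hT : Barred T) : Barred S := fun α =>
  let ⟨u, hu, hTu⟩ := hT α
  ⟨u, hu, hTS u hTu⟩

theorem Spread.productive (hT : Spread T) : Productive T :=
  ⟨T, hT.1, fun v hv => ⟨hv, hT.2 v hv⟩⟩

theorem Pruning.le {u : List B} : Pruning T u → T u :=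
  fun ⟨_, hXu, hX⟩ => (hX u hXu).1

theorem Productive.spread_pruning (hT : Productive T) : Spread (Pruning T) := by
  refine ⟨hT, ?_⟩
  rintro u ⟨X, hXu, hX⟩
  obtain ⟨-, a, hXa⟩ := hX u hXu
  exact ⟨a, X, hXa, hX⟩

theorem HerClos.hereditary : Hereditary (HerClos T) :=
  HerClos.step

theorem Barred.herClos (hT : Barred T) : Barred (HerClos T) :=
  hT.mono HerClos.base

theorem Hereditary.le_of_herClos (hS : Hereditary S) (hTS : ∀ u, T u → S u) {u : List B}
    (hu : HerClos T u) : S u := by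
  induction hu with
  | base u hTu => exact hTS u hTu
  | step u _ ih => exact hS u ih

theorem infBranch_of_spread_iff_infBranch_of_productive :
    (∀ T : List B → Prop, Spread T → InfBranch T) ↔
      (∀ T : List B → Prop, Productive T → InfBranch T) :=
  ⟨fun h _ hT => (h _ hT.spread_pruning).mono fun _ => Pruning.le,
    fun h T hT => h T hT.productive⟩

theorem barricaded_of_barred_iff_indBarred_of_barred :
    (∀ T : List B → Prop, Barred T → Barricaded T) ↔
      (∀ T : List B → Prop, Barred T → IndBarred T) :=
  ⟨fun h _ hT => h _ hT.herClos HerClos.hereditary,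
    fun h T hT hher => hher.le_of_herClos (fun _ => id) (h T hT)⟩

end BarInd

open BarInd in
theorem stmt6 {B : Type*} :
    ((∀ T : List B → Prop, Spread T → InfBranch T) ↔
      (∀ T : List B → Prop, Productive T → InfBranch T)) ∧
    ((∀ T : List B → Prop, Barred T → Barricaded T) ↔
      (∀ T : List B → Prop, Barred T → IndBarred T)) :=
  ⟨infBranch_of_spread_iff_infBranch_of_productive,
    barricaded_of_barred_iff_indBarred_of_barred⟩
end

section
/- Let B be a nonempty finite type. Then: (∀ predicate T on B*, T a staged infinite tree → T has an infinite branch) holds if and only if (∀ predicate T on B*, T has unbounded paths → T has an infinite branch) holds; and dually, (∀ predicate T on B*, T barred and monotone → T staged barred) holds if and only if (∀ predicate T on B*, T barred → T uniformly barred) holds. -/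
/-!
Arborifying `T` downwards turns "unbounded paths" into "staged infinite" and produces a tree,
without changing the infinite branches; on a tree it does nothing. Dually, monotonising `T`
upwards turns "uniformly barred" into "staged barred" and produces a monotone predicate,
without changing barredness; on a monotone predicate it does nothing.
-/

namespace BarInd

variable {B : Type*} {T : List B → Prop}

theorem SeqPrefix.of_prefix {u u' : List B} {α : ℕ → B} (h : u' <+: u) (hu : SeqPrefix u α) :
    SeqPrefix u' α := fun i => by
  simpa [h.getElem i.isLt] using hu ⟨i, i.isLt.trans_le h.length_le⟩

theorem IsTree.of_prefix (hT : IsTree T) {u u' : List B} (h : u' <+: u) (hu : T u) : T u' := by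
  obtain ⟨t, rfl⟩ := h
  induction t using List.reverseRecOn with
  | nil => simpa using hu
  | append_singleton s b ih => exact ih (hT _ b (by rwa [← List.append_assoc] at hu))

theorem IsMono.of_prefix (hT : IsMono T) {u u' : List B} (h : u' <+: u) (hu' : T u') : T u := by
  obtain ⟨t, rfl⟩ := h
  induction t using List.reverseRecOn with
  | nil => simpa using hu'
  | append_singleton s b ih => rw [← List.append_assoc]; exact hT _ b ih

theorem isTree_downArbor (T : List B → Prop) : IsTree (DownArbor T) :=
  fun _ a h u' hu' => h u' (hu'.trans (List.prefix_append _ [a]))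

theorem isMono_upMonot (T : List B → Prop) : IsMono (UpMonot T) :=
  fun _ a ⟨u', hu', h⟩ => ⟨u', hu'.trans (List.prefix_append _ [a]), h⟩

theorem IsTree.downArbor_eq (hT : IsTree T) : DownArbor T = T :=
  funext fun u => propext ⟨fun h => h u (List.prefix_refl u), fun h _ hu' => hT.of_prefix hu' h⟩

theorem IsMono.upMonot_eq (hT : IsMono T) : UpMonot T = T :=
  funext fun u => propext ⟨fun ⟨_, hu', h⟩ => hT.of_prefix hu' h, fun h => ⟨u, List.prefix_refl u, h⟩⟩

theorem infBranch_downArbor_iff : InfBranch (DownArbor T) ↔ InfBranch T :=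
  ⟨fun ⟨α, hα⟩ => ⟨α, fun u hu => hα u hu u (List.prefix_refl u)⟩,
    fun ⟨α, hα⟩ => ⟨α, fun _ hu _ hu' => hα _ (hu.of_prefix hu')⟩⟩

theorem barred_upMonot_iff : Barred (UpMonot T) ↔ Barred T :=
  ⟨fun hT α =>
    let ⟨_, hu, u', hu', h⟩ := hT α
    ⟨u', hu.of_prefix hu', h⟩,
    fun hT α => (hT α).imp fun u ⟨hu, h⟩ => ⟨hu, u, List.prefix_refl u, h⟩⟩

end BarInd

open BarInd in
theorem stmt7_general {B : Type*} :
    ((∀ T : List B → Prop, StagedInfinite T → IsTree T → InfBranch T) ↔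
      (∀ T : List B → Prop, UnboundedPaths T → InfBranch T)) ∧
    ((∀ T : List B → Prop, Barred T → IsMono T → StagedBarred T) ↔
      (∀ T : List B → Prop, Barred T → UniformlyBarred T)) := by
  refine ⟨⟨fun H T hT => ?_, fun H T hT hTree => H T ?_⟩,
    ⟨fun H T hT => ?_, fun H T hT hMono => ?_⟩⟩
  · rw [← infBranch_downArbor_iff]
    exact H (DownArbor T) hT (isTree_downArbor T)
  · change StagedInfinite (DownArbor T)
    rwa [hTree.downArbor_eq]
  · exact H (UpMonot T) (barred_upMonot_iff.mpr hT) (isMono_upMonot T)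
  · rw [← hMono.upMonot_eq]
    exact H T hT

open BarInd in
theorem stmt7 {B : Type*} [Nonempty B] [Finite B] :
    ((∀ T : List B → Prop, StagedInfinite T → IsTree T → InfBranch T) ↔
      (∀ T : List B → Prop, UnboundedPaths T → InfBranch T)) ∧
    ((∀ T : List B → Prop, Barred T → IsMono T → StagedBarred T) ↔
      (∀ T : List B → Prop, Barred T → UniformlyBarred T)) :=
  stmt7_general
end

section
/- Let B be a type and R a binary relation on B. If R is serial (∀ b, ∃ b', R(b,b')), then for every b₀ ∈ B the positive alignment R▷⊤(b₀) is productive. Dually, if for some b₀ the blockings R▷⊥(b₀) is inductively barred, then R has a least element, i.e. ∃ b, ∀ b', R(b,b'). -/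
/-! Both alignments constrain only the last step of a sequence. Seriality therefore lets every
sequence be extended inside `R▷⊤(b₀)`, which makes it spread and hence productive. Dually, if `R`
had no least element, every sequence could be extended outside `R▷⊥(b₀)`; the complement is then
closed under the step rule of the hereditary closure, so `⟨⟩` would have to be a blocking. -/

namespace BarInd

variable {B : Type*}

theorem productive_of_spread {T : List B → Prop} (hT : Spread T) : Productive T :=
  ⟨T, hT.1, fun v hv => ⟨hv, hT.2 v hv⟩⟩

theorem HerClos.self_of_forall_exists_not_append {T : List B → Prop}
    (hT : ∀ v, ¬ T v → ∃ a, ¬ T (v ++ [a])) {u : List B} (hu : HerClos T u) : T u := by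
  induction hu with
  | base u hu => exact hu
  | step u _ ih =>
    by_contra hnot
    obtain ⟨a, ha⟩ := hT u hnot
    exact ha (ih a)

theorem posAlign_append_singleton (R : B → B → Prop) (b₀ : B) (u : List B) (a : B) :
    PosAlign R b₀ (u ++ [a]) ↔ R (u.getLastD b₀) a := by
  rcases List.eq_nil_or_concat u with rfl | ⟨v, b, rfl⟩ <;> simp [PosAlign]

theorem blockings_append_singleton (R : B → B → Prop) (b₀ : B) (u : List B) (a : B) :
    Blockings R b₀ (u ++ [a]) ↔ R (u.getLastD b₀) a := by
  rcases List.eq_nil_or_concat u with rfl | ⟨v, b, rfl⟩ <;> simp [Blockings]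

theorem spread_posAlign {R : B → B → Prop} (hR : ∀ b, ∃ b', R b b') (b₀ : B) :
    Spread (PosAlign R b₀) := by
  refine ⟨trivial, fun u _ => ?_⟩
  obtain ⟨a, ha⟩ := hR (u.getLastD b₀)
  exact ⟨a, (posAlign_append_singleton R b₀ u a).mpr ha⟩

theorem exists_forall_of_indBarred_blockings {R : B → B → Prop} {b₀ : B}
    (h : IndBarred (Blockings R b₀)) : ∃ b, ∀ b', R b b' := by
  by_contra! hR
  refine (HerClos.self_of_forall_exists_not_append (fun u _ => ?_) h : Blockings R b₀ [])
  obtain ⟨a, ha⟩ := hR (u.getLastD b₀)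
  exact ⟨a, mt (blockings_append_singleton R b₀ u a).mp ha⟩

end BarInd

open BarInd in
theorem stmt9 {B : Type*} (R : B → B → Prop) :
    ((∀ b, ∃ b', R b b') → ∀ b₀, Productive (PosAlign R b₀)) ∧
    ((∃ b₀, IndBarred (Blockings R b₀)) → ∃ b, ∀ b', R b b') :=
  ⟨fun hR b₀ => productive_of_spread (spread_posAlign hR b₀),
    fun ⟨_, h⟩ => exists_forall_of_indBarred_blockings h⟩
end

section
/- Let B be a type and R : ℕ → B → Prop a relation. Then countable choice for R, namely ((∀ n, ∃ b, R(n,b)) → ∃ α : ℕ → B, ∀ n, R(n, α(n))), holds if and only if (R^ℕ⊤ productive → R^ℕ⊤ has an infinite branch) holds. Dually, weak bar induction for R, namely ((∀ α : ℕ → B, ∃ n, R(n, α(n))) → ∃ n, ∀ b, R(n,b)), holds if and only if (R^ℕ⊥ barred → R^ℕ⊥ inductively barred) holds. -/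
/-
Both equivalences hold because the two sides say literally the same thing. A sequence lies in
`R^ℕ⊤` exactly when its last entry `b`, at position `n`, satisfies `R n b`, so `R^ℕ⊤` is productive
iff every stage `n` admits some `b` with `R n b`, and an infinite branch of `R^ℕ⊤` is a choice
function for `R`. Dually, `R^ℕ⊥` is barred iff every `α` meets `R` somewhere, and it is
inductively barred iff some stage `n` is entirely covered by `R`: if `R n b` holds for all `b`,
every sequence of length `n + 1` is in `R^ℕ⊥`; conversely, if every stage has a `b` with
`¬ R n b`, the hereditary closure of `R^ℕ⊥` adds nothing to it, and `⟨⟩ ∉ R^ℕ⊥`.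
-/

namespace BarInd

variable {B : Type*}

theorem seqPrefix_map_range (α : ℕ → B) (n : ℕ) : SeqPrefix ((List.range n).map α) α := by
  intro i
  simp

theorem SeqPrefix.eq_of_append_singleton {u : List B} {b : B} {α : ℕ → B}
    (h : SeqPrefix (u ++ [b]) α) : b = α u.length := by
  simpa using h ⟨u.length, by simp⟩

section Closures

variable {T : List B → Prop}

theorem Pruning.mem {u : List B} (h : Pruning T u) : T u :=
  let ⟨_, hu, hX⟩ := h; (hX u hu).1

theorem Pruning.exists_append_singleton {u : List B} (h : Pruning T u) :
    ∃ a, Pruning T (u ++ [a]) :=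
  let ⟨X, hu, hX⟩ := h
  let ⟨a, ha⟩ := (hX u hu).2
  ⟨a, X, ha, hX⟩

theorem Productive.exists_pruning_length_eq (h : Productive T) (n : ℕ) :
    ∃ u, Pruning T u ∧ u.length = n := by
  induction n with
  | zero => exact ⟨[], h, rfl⟩
  | succ n ih =>
    obtain ⟨u, hu, rfl⟩ := ih
    obtain ⟨a, ha⟩ := hu.exists_append_singleton
    exact ⟨u ++ [a], ha, by simp⟩

theorem herClos_of_forall_length_eq {n : ℕ} (hT : ∀ u : List B, u.length = n → T u)
    (u : List B) (hu : u.length ≤ n) : HerClos T u := by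
  obtain ⟨k, hk⟩ := Nat.exists_eq_add_of_le hu
  induction k generalizing u with
  | zero => exact .base u (hT u hk.symm)
  | succ k ih => exact .step u fun a => ih (u ++ [a]) (by simp; omega) (by simp; omega)

theorem StagedBarred.indBarred (h : StagedBarred T) : IndBarred T :=
  let ⟨n, hn⟩ := h
  herClos_of_forall_length_eq hn [] (Nat.zero_le n)

end Closures

variable (R : ℕ → B → Prop)

@[simp] theorem seqPosAlign_nil : SeqPosAlign R [] := trivial

@[simp] theorem seqPosAlign_append_singleton (u : List B) (b : B) :
    SeqPosAlign R (u ++ [b]) ↔ R u.length b := by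
  simp [SeqPosAlign]

theorem productive_seqPosAlign_iff : Productive (SeqPosAlign R) ↔ ∀ n, ∃ b, R n b := by
  refine ⟨fun h n => ?_, fun h => ⟨SeqPosAlign R, trivial, fun u hu => ⟨hu, ?_⟩⟩⟩
  · obtain ⟨u, hu, rfl⟩ := h.exists_pruning_length_eq n
    obtain ⟨b, hb⟩ := hu.exists_append_singleton
    exact ⟨b, by simpa using hb.mem⟩
  · obtain ⟨b, hb⟩ := h u.length
    exact ⟨b, by simpa using hb⟩

theorem infBranch_seqPosAlign_iff : InfBranch (SeqPosAlign R) ↔ ∃ α : ℕ → B, ∀ n, R n (α n) := by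
  refine ⟨fun ⟨α, hα⟩ => ⟨α, fun n => ?_⟩, fun ⟨α, hα⟩ => ⟨α, fun u hu => ?_⟩⟩
  · simpa [List.range_succ] using hα _ (seqPrefix_map_range α (n + 1))
  · rcases List.eq_nil_or_concat' u with rfl | ⟨w, b, rfl⟩
    · exact seqPosAlign_nil R
    · simpa [hu.eq_of_append_singleton] using hα w.length

@[simp] theorem not_seqNegAlign_nil : ¬ SeqNegAlign R [] := id

@[simp] theorem seqNegAlign_append_singleton (u : List B) (b : B) :
    SeqNegAlign R (u ++ [b]) ↔ R u.length b := by
  simp [SeqNegAlign]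

theorem barred_seqNegAlign_iff : Barred (SeqNegAlign R) ↔ ∀ α : ℕ → B, ∃ n, R n (α n) := by
  refine ⟨fun h α => ?_, fun h α => ?_⟩
  · obtain ⟨u, hu, hR⟩ := h α
    rcases List.eq_nil_or_concat' u with rfl | ⟨w, b, rfl⟩
    · exact absurd hR (not_seqNegAlign_nil R)
    · exact ⟨w.length, by simpa [hu.eq_of_append_singleton] using hR⟩
  · obtain ⟨n, hn⟩ := h α
    exact ⟨_, seqPrefix_map_range α (n + 1), by simpa [List.range_succ] using hn⟩

theorem seqNegAlign_of_herClos (hR : ∀ n, ∃ b, ¬ R n b) {u : List B}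
    (hu : HerClos (SeqNegAlign R) u) : SeqNegAlign R u := by
  induction hu with
  | base u h => exact h
  | step u _ ih =>
    obtain ⟨b, hb⟩ := hR u.length
    exact absurd (by simpa using ih b) hb

theorem indBarred_seqNegAlign_iff : IndBarred (SeqNegAlign R) ↔ ∃ n, ∀ b, R n b := by
  refine ⟨fun h => ?_, fun ⟨n, hn⟩ => StagedBarred.indBarred ⟨n + 1, fun u hu => ?_⟩⟩
  · by_contra! hR
    exact not_seqNegAlign_nil R (seqNegAlign_of_herClos R hR h)
  · obtain ⟨w, b, rfl⟩ := (List.eq_nil_or_concat' u).resolve_left (by rintro rfl; simp at hu)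
    simpa [show w.length = n by simpa using hu] using hn b

end BarInd

open BarInd in
theorem stmt11 {B : Type*} (R : ℕ → B → Prop) :
    (((∀ n, ∃ b, R n b) → ∃ α : ℕ → B, ∀ n, R n (α n)) ↔
      (Productive (SeqPosAlign R) → InfBranch (SeqPosAlign R))) ∧
    (((∀ α : ℕ → B, ∃ n, R n (α n)) → ∃ n, ∀ b, R n b) ↔
      (Barred (SeqNegAlign R) → IndBarred (SeqNegAlign R))) := by
  rw [productive_seqPosAlign_iff, infBranch_seqPosAlign_iff, barred_seqNegAlign_iff,
    indBarred_seqNegAlign_iff]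
  exact ⟨Iff.rfl, Iff.rfl⟩
end

section
/- Let B be a type. The scheme (∀ predicate T on B*, T productive → T has an infinite branch) holds if and only if the scheme (∀ predicate T on (ℕ × B)*, T ℕ-B-approximable → T has an ℕ-B-choice function) holds. Dually, (∀ predicate T on B*, T barred → T inductively barred) holds if and only if (∀ predicate T on (ℕ × B)*, T ℕ-B-barred → T inductively ℕ-B-barred) holds. -/
/-!
Sequences over `B` embed into finite approximations of functions `ℕ → B` via
`ordSeq u = [(0, u₀), …, (n-1, uₙ₋₁)]`, and `ordSeq u ⊆ ordSeq u'` exactly when `u` is a prefix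
of `u'`. The two kinds of extension steps simulate each other: a sequential step `u ↦ u ++ [b]`
is the pair step at the fresh position `|u|`, and a pair step at an arbitrary position `a` is
realised by extending `u` sequentially beyond `a`. In the same way every `v ≺ α` is contained in
`ordSeq` of a long enough initial segment of `α`, so infinite branches and choice functions, and
bars for sequences and for approximations, correspond to each other.
-/

namespace BarInd

variable {A B : Type*}

section ordSeq

lemma mem_ordSeq {u : List B} {n : ℕ} {b : B} : (n, b) ∈ ordSeq u ↔ u[n]? = some b := by
  simp [ordSeq, ← List.mk_mem_zipIdx_iff_getElem?]

lemma ordSeq_concat (u : List B) (b : B) :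
    ordSeq (u ++ [b]) = ordSeq u ++ [(u.length, b)] := by
  simp [ordSeq, List.zipIdx_append]

lemma not_inDom_ordSeq_length (u : List B) : ¬ InDom (ordSeq u) u.length := by
  rintro ⟨b, hb⟩
  simp [mem_ordSeq] at hb

lemma psub_ordSeq_iff_prefix {u u' : List B} : PSub (ordSeq u) (ordSeq u') ↔ u <+: u' := by
  rw [List.prefix_iff_getElem?]
  constructor
  · intro h i hi
    exact mem_ordSeq.1 (h _ (mem_ordSeq.2 (List.getElem?_eq_getElem hi)))
  · rintro h ⟨i, b⟩ hib
    obtain ⟨hi, rfl⟩ := List.getElem?_eq_some_iff.1 (mem_ordSeq.1 hib)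
    exact mem_ordSeq.2 (h i hi)

lemma psub_append_ordSeq {w : List (ℕ × B)} {u u' : List B} (hw : PSub w (ordSeq u))
    (hu : u <+: u') {n : ℕ} (hn : n < u'.length) :
    PSub (w ++ [(n, u'[n])]) (ordSeq u') := by
  intro x hx
  rcases List.mem_append.1 hx with hx | hx
  · exact psub_ordSeq_iff_prefix.2 hu x (hw x hx)
  · rw [List.mem_singleton.1 hx, mem_ordSeq]
    exact List.getElem?_eq_getElem hn

lemma pairPrefix_ordSeq {u : List B} {α : ℕ → B} (h : SeqPrefix u α) :
    PairPrefix (ordSeq u) α := by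
  rintro ⟨i, b⟩ hib
  obtain ⟨hi, rfl⟩ := List.getElem?_eq_some_iff.1 (mem_ordSeq.1 hib)
  exact (h ⟨i, hi⟩).symm

lemma PairPrefix.exists_seqPrefix_psub_ordSeq {v : List (ℕ × B)} {α : ℕ → B}
    (h : PairPrefix v α) : ∃ u, SeqPrefix u α ∧ PSub v (ordSeq u) := by
  refine ⟨(List.range ((v.map Prod.fst).sum + 1)).map α, fun i => by simp, ?_⟩
  rintro ⟨i, b⟩ hib
  have hi : i < (v.map Prod.fst).sum + 1 :=
    Nat.lt_succ_of_le (List.le_sum_of_mem (List.mem_map_of_mem hib))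
  rw [mem_ordSeq, ← show α i = b from h _ hib]
  simp [hi]

end ordSeq

section sequences

variable {T : List B → Prop} {u : List B}

lemma Pruning.self (h : Pruning T u) : T u := by
  obtain ⟨X, hu, hX⟩ := h
  exact (hX u hu).1

lemma Pruning.exists_concat (h : Pruning T u) : ∃ b, Pruning T (u ++ [b]) := by
  obtain ⟨X, hu, hX⟩ := h
  obtain ⟨b, hb⟩ := (hX u hu).2
  exact ⟨b, X, hb, hX⟩

lemma Pruning.exists_extension (h : Pruning T u) (n : ℕ) :
    ∃ u', u <+: u' ∧ n ≤ u'.length ∧ Pruning T u' := by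
  induction n with
  | zero => exact ⟨u, List.prefix_refl u, Nat.zero_le _, h⟩
  | succ n ih =>
    obtain ⟨u', hpre, hlen, hu'⟩ := ih
    obtain ⟨b, hb⟩ := hu'.exists_concat
    exact ⟨u' ++ [b], hpre.trans (List.prefix_append _ _), by simpa using hlen, hb⟩

lemma DownArbor.concat (hu : DownArbor T u) {b : B} (hb : T (u ++ [b])) :
    DownArbor T (u ++ [b]) := by
  intro u' hu'
  rcases List.prefix_concat_iff.1 hu' with rfl | hu'
  exacts [hb, hu u' hu']

lemma Productive.downArbor (h : Productive T) : Productive (DownArbor T) := by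
  refine ⟨fun v => Pruning T v ∧ DownArbor T v, ⟨h, fun u' hu' => ?_⟩, ?_⟩
  · rw [List.prefix_nil.1 hu']
    exact h.self
  · rintro v ⟨hv, hdown⟩
    obtain ⟨b, hb⟩ := hv.exists_concat
    exact ⟨hdown, b, hb, hdown.concat hb.self⟩

lemma HerClos.of_forall_extension (n : ℕ)
    (h : ∀ u', u <+: u' → n ≤ u'.length → HerClos T u') : HerClos T u := by
  induction hk : n - u.length generalizing u with
  | zero => exact h u (List.prefix_refl u) (by omega)
  | succ k ih =>
    refine .step u fun b => ih (fun u' hu' hlen => ?_) (by simp only [List.length_append, List.length_singleton]; omega)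
    exact h u' ((List.prefix_append u [b]).trans hu') hlen

lemma HerClos.exists_prefix_of_upMonot (h : HerClos (UpMonot T) u) :
    ∃ u', u' <+: u ∧ HerClos T u' := by
  induction h with
  | base u hu =>
    obtain ⟨u', hpre, hu'⟩ := hu
    exact ⟨u', hpre, .base u' hu'⟩
  | step u _ ih =>
    by_cases hprefix : ∃ u', u' <+: u ∧ HerClos T u'
    · exact hprefix
    refine ⟨u, List.prefix_refl u, .step u fun b => ?_⟩
    obtain ⟨u', hpre, hu'⟩ := ih b
    rcases List.prefix_concat_iff.1 hpre with rfl | hpre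
    exacts [hu', absurd ⟨u', hpre, hu'⟩ hprefix]

end sequences

section approximations

variable {T : List (A × B) → Prop} {w : List (A × B)}

lemma ApproxFrom.of_psub (h : ApproxFrom T w) {v : List (A × B)} (hv : PSub v w) : T v := by
  obtain ⟨X, hw, hX⟩ := h
  exact (hX w hw).1 v hv

lemma ApproxFrom.exists_concat (h : ApproxFrom T w) {a : A} (ha : ¬ InDom w a) :
    ∃ b, ApproxFrom T (w ++ [(a, b)]) := by
  obtain ⟨X, hw, hX⟩ := h
  obtain ⟨b, hb⟩ := (hX w hw).2 a ha
  exact ⟨b, X, hb, hX⟩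

end approximations

section transfer

theorem pairChoiceFn_of_approximable (H : ∀ T : List B → Prop, Productive T → InfBranch T)
    {T : List (ℕ × B) → Prop} (hT : Approximable T) : PairChoiceFn T := by
  have hprod : Productive (normT (ApproxFrom T)) := by
    refine ⟨normT (ApproxFrom T), hT, fun u hu => ⟨hu, ?_⟩⟩
    obtain ⟨b, hb⟩ := hu.exists_concat (not_inDom_ordSeq_length u)
    exact ⟨b, by rwa [normT, ordSeq_concat]⟩
  obtain ⟨α, hα⟩ := H _ hprod
  refine ⟨α, fun v hv => ?_⟩
  obtain ⟨u, hu, hvu⟩ := hv.exists_seqPrefix_psub_ordSeq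
  exact (hα u hu).of_psub hvu

theorem infBranch_of_productive
    (H : ∀ T : List (ℕ × B) → Prop, Approximable T → PairChoiceFn T)
    {T : List B → Prop} (hT : Productive T) : InfBranch T := by
  -- Pruning `⌊T⌋` rather than `T`: a branch point `ordSeq u ⊆ ordSeq u'` only puts `u` among the
  -- prefixes of `u'`, so `T` has to hold on all of them.
  set S := UpPairArbor (hatT (Pruning (DownArbor T)))
  have happrox : Approximable S := by
    refine ⟨S, ⟨[], fun _ h => h, [], hT.downArbor, rfl⟩, ?_⟩
    rintro w ⟨_, hw, u, hu, rfl⟩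
    refine ⟨fun v hv => ⟨_, fun x hx => hw x (hv x hx), u, hu, rfl⟩, fun a _ => ?_⟩
    obtain ⟨u', hpre, hlen, hu'⟩ := hu.exists_extension (a + 1)
    exact ⟨u'[a], _, psub_append_ordSeq hw hpre hlen, u', hu', rfl⟩
  obtain ⟨α, hα⟩ := H S happrox
  refine ⟨α, fun u hu => ?_⟩
  obtain ⟨_, hsub, u', hu', rfl⟩ := hα _ (pairPrefix_ordSeq hu)
  exact hu'.self u (psub_ordSeq_iff_prefix.1 hsub)

theorem inductivelyPairBarred_of_pairBarred
    (H : ∀ T : List B → Prop, Barred T → IndBarred T)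
    {T : List (ℕ × B) → Prop} (hT : PairBarred T) : InductivelyPairBarred T := by
  have hbarred : Barred (normT (UpPairMonot T)) := fun α => by
    obtain ⟨v, hv, hTv⟩ := hT α
    obtain ⟨u, hu, hvu⟩ := hv.exists_seqPrefix_psub_ordSeq
    exact ⟨u, hu, v, hvu, hTv⟩
  have key (u : List B) (h : HerClos (normT (UpPairMonot T)) u) :
      IndPairBarred T (ordSeq u) := by
    induction h with
    | base u hu => exact .base _ hu
    | step u _ ih =>
      refine .step _ _ (not_inDom_ordSeq_length u) fun b => ?_
      simpa only [ordSeq_concat] using ih b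
  exact key [] (H _ hbarred)

theorem indBarred_of_barred
    (H : ∀ T : List (ℕ × B) → Prop, PairBarred T → InductivelyPairBarred T)
    {T : List B → Prop} (hT : Barred T) : IndBarred T := by
  have hbarred : PairBarred (hatT T) := fun α => by
    obtain ⟨u, hu, hTu⟩ := hT α
    exact ⟨ordSeq u, pairPrefix_ordSeq hu, u, hTu, rfl⟩
  have key (w : List (ℕ × B)) (h : IndPairBarred (hatT T) w) (u : List B)
      (hwu : PSub w (ordSeq u)) : HerClos (UpMonot T) u := by
    induction h generalizing u with
    | base w hw =>
      obtain ⟨_, hsub, u₀, hu₀, rfl⟩ := hw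
      exact .base u ⟨u₀, psub_ordSeq_iff_prefix.1 fun x hx => hwu x (hsub x hx), hu₀⟩
    | step w a _ _ ih =>
      exact .of_forall_extension (a + 1) fun u' hpre hlen =>
        ih _ u' (psub_append_ordSeq hwu hpre hlen)
  obtain ⟨u, hu, hcl⟩ := (key [] (H _ hbarred) [] fun _ h => h).exists_prefix_of_upMonot
  rwa [List.prefix_nil.1 hu] at hcl

end transfer

end BarInd

open BarInd in
theorem stmt15 {B : Type*} :
    ((∀ T : List B → Prop, Productive T → InfBranch T) ↔
      (∀ T : List (ℕ × B) → Prop, Approximable T → PairChoiceFn T)) ∧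
    ((∀ T : List B → Prop, Barred T → IndBarred T) ↔
      (∀ T : List (ℕ × B) → Prop, PairBarred T → InductivelyPairBarred T)) :=
  ⟨⟨fun H _ => pairChoiceFn_of_approximable H, fun H _ => infBranch_of_productive H⟩,
    ⟨fun H _ => inductivelyPairBarred_of_pairBarred H, fun H _ => indBarred_of_barred H⟩⟩
end

section
/- Let A := ℕ → Bool and define the predicate T on (A × ℕ)* by: v ∈ T iff for all pairs (f,n) and (f',n') occurring in v, n = n' implies f = f'. Then T is A-ℕ-approximable, but T has no A-ℕ-choice function. In particular, the scheme (∀ predicate T' on (A × ℕ)*, T' A-ℕ-approximable → T' has an A-ℕ-choice function) is false. -/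
/-!
The predicate says that the finite partial function `v` is injective. Finite approximations can
always be extended injectively, since a fresh natural number is available for every new argument;
but a choice function would then be an injection `(ℕ → Bool) → ℕ`, which Cantor's diagonal argument
rules out.
-/

theorem Function.not_injective_boolFun {α : Type*} (F : (α → Bool) → α) :
    ¬ Function.Injective F := by
  classical
  intro hF
  refine Function.cantor_injective (F ∘ fun s a => decide (a ∈ s)) (hF.comp fun s t hst => ?_)
  ext a
  simpa using congrFun hst a

namespace BarInd

variable {A B : Type*}

def PairsInjective (v : List (A × B)) : Prop :=
  ∀ p ∈ v, ∀ q ∈ v, p.2 = q.2 → p.1 = q.1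

theorem PairsInjective.of_pSub {v w : List (A × B)} (hvw : PSub v w) (hw : PairsInjective w) :
    PairsInjective v :=
  fun p hp q hq => hw p (hvw p hp) q (hvw q hq)

theorem PairsInjective.append_singleton {w : List (A × B)} {b : B} (hw : PairsInjective w)
    (hb : b ∉ w.map Prod.snd) (a : A) : PairsInjective (w ++ [(a, b)]) := by
  have fresh : ∀ p ∈ w, p.2 ≠ b := fun p hp h => hb (h ▸ List.mem_map_of_mem hp)
  intro p hp q hq hpq
  simp only [List.mem_append, List.mem_singleton] at hp hq
  rcases hp with hp | rfl <;> rcases hq with hq | rfl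
  · exact hw p hp q hq hpq
  · exact absurd hpq (fresh p hp)
  · exact absurd hpq.symm (fresh q hq)
  · rfl

theorem approximable_pairsInjective [Infinite B] :
    Approximable (PairsInjective (A := A) (B := B)) := by
  classical
  refine ⟨PairsInjective, by simp [PairsInjective], fun w hw => ⟨fun v hvw => hw.of_pSub hvw, ?_⟩⟩
  intro a _
  obtain ⟨b, hb⟩ := Infinite.exists_notMem_finset (w.map Prod.snd).toFinset
  exact ⟨b, hw.append_singleton (by simpa using hb) a⟩

theorem injective_of_pairChoiceFn_pairsInjective
    (h : PairChoiceFn (PairsInjective (A := A) (B := B))) : ∃ α : A → B, Function.Injective α := by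
  obtain ⟨α, hα⟩ := h
  refine ⟨α, fun f g hfg => ?_⟩
  have graph_prefix : PairPrefix [(f, α f), (g, α g)] α := by simp [PairPrefix]
  exact hα _ graph_prefix (f, α f) (by simp) (g, α g) (by simp) hfg

theorem not_pairChoiceFn_pairsInjective {α : Type*} :
    ¬ PairChoiceFn (PairsInjective (A := α → Bool) (B := α)) := fun h =>
  let ⟨F, hF⟩ := injective_of_pairChoiceFn_pairsInjective h
  Function.not_injective_boolFun F hF

end BarInd

open BarInd in
theorem stmt17 :
    Approximable (fun v : List ((ℕ → Bool) × ℕ) =>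
        ∀ p ∈ v, ∀ q ∈ v, p.2 = q.2 → p.1 = q.1) ∧
    ¬ PairChoiceFn (fun v : List ((ℕ → Bool) × ℕ) =>
        ∀ p ∈ v, ∀ q ∈ v, p.2 = q.2 → p.1 = q.1) ∧
    ¬ (∀ T' : List ((ℕ → Bool) × ℕ) → Prop, Approximable T' → PairChoiceFn T') :=
  ⟨approximable_pairsInjective, not_pairChoiceFn_pairsInjective,
    fun h => not_pairChoiceFn_pairsInjective (h _ approximable_pairsInjective)⟩
end

section
/- Let A and B be types and R : A → B → Prop a relation. Define the positive alignment R⊤ as the predicate on (A × B)* given by v ∈ R⊤ iff R(a,b) for every pair (a,b) occurring in v. Then the axiom of choice for R, namely ((∀ a, ∃ b, R(a,b)) → ∃ α : A → B, ∀ a, R(a, α(a))), holds if and only if (R⊤ A-B-approximable → R⊤ has an A-B-choice function) holds. -/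
namespace BarInd

variable {A B : Type*}

theorem Approximable.exists_singleton {T : List (A × B) → Prop} (hT : Approximable T) (a : A) :
    ∃ b, T [(a, b)] := by
  obtain ⟨X, hX₀, hX⟩ := hT
  obtain ⟨b, hb⟩ := (hX [] hX₀).2 a (by simp [InDom])
  exact ⟨b, (hX _ hb).1 [(a, b)] fun _ hx => hx⟩

theorem PairChoiceFn.exists_singleton {T : List (A × B) → Prop} (hT : PairChoiceFn T) :
    ∃ α : A → B, ∀ a, T [(a, α a)] := by
  obtain ⟨α, hα⟩ := hT
  exact ⟨α, fun a => hα [(a, α a)] (by simp [PairPrefix])⟩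

variable (R : A → B → Prop)

theorem approximable_forall_mem_iff :
    Approximable (fun v : List (A × B) => ∀ p ∈ v, R p.1 p.2) ↔ ∀ a, ∃ b, R a b := by
  refine ⟨fun h a => (h.exists_singleton a).imp fun b hb => hb (a, b) (by simp), fun hR => ?_⟩
  -- `R⊤` is its own witness: it is closed under `⊆`, and totality of `R` extends it at any new point.
  refine ⟨fun v => ∀ p ∈ v, R p.1 p.2, by simp, fun w hw => ⟨fun v hv p hp => hw p (hv p hp), ?_⟩⟩
  intro a _
  obtain ⟨b, hb⟩ := hR a
  exact ⟨b, fun p hp => (List.mem_append.1 hp).elim (hw p) fun hp => by simp_all⟩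

theorem pairChoiceFn_forall_mem_iff :
    PairChoiceFn (fun v : List (A × B) => ∀ p ∈ v, R p.1 p.2) ↔ ∃ α : A → B, ∀ a, R a (α a) := by
  refine ⟨fun h => h.exists_singleton.imp fun α hα a => hα a (a, α a) (by simp), ?_⟩
  rintro ⟨α, hα⟩
  exact ⟨α, fun v hv p hp => hv p hp ▸ hα p.1⟩

end BarInd

open BarInd in
theorem stmt18 {A B : Type*} (R : A → B → Prop) :
    ((∀ a, ∃ b, R a b) → ∃ α : A → B, ∀ a, R a (α a)) ↔
    (Approximable (fun v : List (A × B) => ∀ p ∈ v, R p.1 p.2) →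
      PairChoiceFn (fun v : List (A × B) => ∀ p ∈ v, R p.1 p.2)) := by
  rw [approximable_forall_mem_iff, pairChoiceFn_forall_mem_iff]
end
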